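/- Let p be a prime, and let 1 ≤ b ≤ a be integers with ν_p(a-b) = 0 and {ν_p(a), ν_p(b)} = {0, k} for some k ≥ 0. Writing z_n for the p-adic limit lim_e (-1)^(p·u(n)·e) · u((u(n)·p^e)!) (where u(n) is the unit part of n), and c = a if ν_p(a) = k, c = b if ν_p(b) = k, then for all sufficiently large e, u(C(a·p^e, b·p^e)) ≡ (-1)^(p·c·k) · z_a / (z_b · z_{a-b}) (mod p^e). -/

import Mathlib

/-- The unit part of `n` with respect to `p`: `n / p^(ν_p(n))`. -/
def unitPart (p n : ℕ) : ℕ := n / p ^ (padicValNat p n)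

/-- `IsZ p n z` says that `z` is the p-adic limit of `(-1)^(p·u(n)·e) · u((u(n)·p^e)!)`. -/
def IsZ (p : ℕ) [Fact p.Prime] (n : ℕ) (z : ℤ_[p]) : Prop :=
  Filter.Tendsto
    (fun e : ℕ => ((-1 : ℤ_[p]) ^ (p * unitPart p n * e) *
      (unitPart p (Nat.factorial (unitPart p n * p ^ e)) : ℤ_[p])))
    Filter.atTop (nhds z)

/-!
Write `zSeq p m e = (-1)^(p m e) · u((m p^e)!)`. Removing the multiples of `p` from `N!` gives
`u(N!) = u((N/p)!) · ∏_{i ≤ N, p ∤ i} i`, and by Gauss's generalization of Wilson's theorem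
this product is `≡ (-1)^(p m) (mod p^e)` for `N = m p^(e+1)`. Hence
`zSeq p m (e+1) ≡ zSeq p m e (mod p^e)`, so `z_n ≡ zSeq p (u n) e' (mod p^e)` for all `e' ≥ e`.
Reducing the identity `C(a p^e, b p^e) · (b p^e)! · ((a-b) p^e)! = (a p^e)!` between unit parts
modulo `p^e` gives the congruence for every `e`; the hypotheses on the valuations make the
signs agree.
-/

open Finset Nat

section UnitPart

variable {p : ℕ}

theorem unitPart_eq_ordCompl (hp : p.Prime) (n : ℕ) : unitPart p n = ordCompl[p] n := by
  rw [unitPart, Nat.factorization_def n hp]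

theorem unitPart_mul (hp : p.Prime) (m n : ℕ) :
    unitPart p (m * n) = unitPart p m * unitPart p n := by
  simp only [unitPart_eq_ordCompl hp, Nat.ordCompl_mul]

theorem unitPart_pow_mul (hp : p.Prime) (k n : ℕ) : unitPart p (p ^ k * n) = unitPart p n := by
  simp only [unitPart_eq_ordCompl hp, Nat.ordCompl_self_pow_mul n k hp]

theorem unitPart_of_not_dvd {n : ℕ} (h : ¬p ∣ n) : unitPart p n = n := by
  rw [unitPart, padicValNat.eq_zero_of_not_dvd h, pow_zero, Nat.div_one]

theorem pow_padicValNat_mul_unitPart (hp : p.Prime) (n : ℕ) :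
    p ^ padicValNat p n * unitPart p n = n := by
  rw [unitPart_eq_ordCompl hp, ← Nat.factorization_def n hp, Nat.ordProj_mul_ordCompl_eq_self]

theorem neg_one_pow_prime_mul_unitPart {R : Type*} [Monoid R] [HasDistribNeg R] (hp : p.Prime)
    (n t : ℕ) : (-1 : R) ^ (p * unitPart p n * t) = (-1) ^ (p * n * t) := by
  rcases hp.eq_two_or_odd' with rfl | hodd
  · simp only [mul_assoc, pow_mul, neg_one_sq, one_pow]
  · conv_rhs => rw [← pow_padicValNat_mul_unitPart hp n]
    simp only [pow_mul, hodd.neg_one_pow, (hodd.pow).neg_one_pow]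

end UnitPart

section PFreeFactorial

def pFreeFactorial (p N : ℕ) : ℕ := ∏ i ∈ range N with ¬p ∣ i + 1, (i + 1)

theorem factorial_eq_pow_mul_factorial_div_mul_pFreeFactorial (p N : ℕ) :
    N ! = p ^ (N / p) * (N / p)! * pFreeFactorial p N := by
  induction N with
  | zero => simp [pFreeFactorial]
  | succ N ih =>
    rw [pFreeFactorial, prod_filter, prod_range_succ, ← prod_filter, ← pFreeFactorial,
      factorial_succ, ih]
    by_cases h : p ∣ N + 1
    · obtain ⟨q, hq⟩ := h
      have hp0 : 0 < p := Nat.pos_of_ne_zero (by rintro rfl; omega)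
      have hq' : N / p + 1 = q := by
        rw [← Nat.succ_div_of_dvd ⟨q, hq⟩, hq, Nat.mul_div_cancel_left q hp0]
      rw [if_neg (not_not.2 ⟨q, hq⟩), Nat.succ_div_of_dvd ⟨q, hq⟩, factorial_succ, hq, ← hq']
      ring
    · rw [if_pos h, Nat.succ_div_of_not_dvd h]
      ring

variable {p : ℕ}

theorem Nat.Prime.not_dvd_pFreeFactorial (hp : p.Prime) (N : ℕ) : ¬p ∣ pFreeFactorial p N := by
  rw [pFreeFactorial, hp.prime.dvd_finsetProd_iff]
  rintro ⟨i, hi, hdvd⟩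
  exact (mem_filter.1 hi).2 hdvd

theorem unitPart_factorial (hp : p.Prime) (N : ℕ) :
    unitPart p (N !) = unitPart p ((N / p)!) * pFreeFactorial p N := by
  rw [factorial_eq_pow_mul_factorial_div_mul_pFreeFactorial p N, mul_assoc, unitPart_pow_mul hp,
    unitPart_mul hp, unitPart_of_not_dvd (hp.not_dvd_pFreeFactorial N)]

end PFreeFactorial

section Wilson

variable {p : ℕ}

theorem pFreeFactorial_mul_cast {n : ℕ} (hpn : p ∣ n) (m : ℕ) :
    (pFreeFactorial p (m * n) : ZMod n) = (pFreeFactorial p n : ZMod n) ^ m := by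
  induction m with
  | zero => simp [pFreeFactorial]
  | succ m ih =>
    rw [add_one_mul, pFreeFactorial, prod_filter, prod_range_add, ← prod_filter,
      ← pFreeFactorial, Nat.cast_mul, ih, pow_succ, pFreeFactorial, prod_filter]
    congr 1
    push_cast
    refine prod_congr rfl fun i _ => ?_
    have hdvd : p ∣ m * n + i + 1 ↔ p ∣ i + 1 := by
      rw [add_assoc]; exact Nat.dvd_add_right (dvd_mul_of_dvd_right hpn m)
    simp only [hdvd, ZMod.natCast_self, mul_zero, zero_add]

variable [Fact p.Prime]

theorem pFreeFactorial_pow_cast {f : ℕ} (hf : f ≠ 0) :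
    (pFreeFactorial p (p ^ f) : ZMod (p ^ f)) = ∏ u : (ZMod (p ^ f))ˣ, (u : ZMod (p ^ f)) := by
  have hp : p.Prime := Fact.out
  have hcop {j : ℕ} : Nat.Coprime j (p ^ f) ↔ ¬p ∣ j :=
    (Nat.coprime_pow_right_iff (Nat.pos_of_ne_zero hf) _ _).trans
      (Nat.coprime_comm.trans hp.coprime_iff_not_dvd)
  have hlt {j : ℕ} (hj : j ≤ p ^ f) (hpj : ¬p ∣ j) : j < p ^ f :=
    hj.lt_of_ne fun h => hpj (h ▸ dvd_pow_self p hf)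
  have hval (u : (ZMod (p ^ f))ˣ) : ¬p ∣ (u : ZMod (p ^ f)).val :=
    hcop.1 (ZMod.val_coe_unit_coprime u)
  have hval0 (u : (ZMod (p ^ f))ˣ) : 0 < (u : ZMod (p ^ f)).val :=
    Nat.pos_of_ne_zero fun h => hval u (h ▸ dvd_zero p)
  rw [pFreeFactorial, Nat.cast_prod]
  refine prod_bij' (fun j hj => ZMod.unitOfCoprime (j + 1) (hcop.2 (mem_filter.1 hj).2))
    (fun u _ => (u : ZMod (p ^ f)).val - 1) (fun _ _ => mem_univ _) ?_ ?_ ?_ ?_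
  · intro u _
    rw [mem_filter, mem_range, Nat.sub_add_cancel (hval0 u)]
    exact ⟨by have := ZMod.val_lt (u : ZMod (p ^ f)); omega, hval u⟩
  · intro j hj
    obtain ⟨hj, hpj⟩ := mem_filter.1 hj
    rw [ZMod.coe_unitOfCoprime, ZMod.val_cast_of_lt (hlt (mem_range.1 hj) hpj), Nat.succ_sub_one]
  · intro u _
    ext
    rw [ZMod.coe_unitOfCoprime, Nat.sub_add_cancel (hval0 u), ZMod.natCast_zmod_val]
  · intro j _
    rw [ZMod.coe_unitOfCoprime]

end Wilson

theorem sq_prod_univ_eq_one {G : Type*} [CommGroup G] [Fintype G] : (∏ g : G, g) ^ 2 = 1 := by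
  have hinv : (∏ g : G, g)⁻¹ = ∏ g : G, g := by
    rw [← prod_inv_distrib]
    exact Equiv.prod_comp (Equiv.inv G) id
  rw [sq]
  nth_rewrite 1 [← hinv]
  exact inv_mul_cancel _

theorem prod_units_eq_neg_one_of_sq_eq_one {R : Type*} [CommRing R] [Fintype Rˣ]
    (h : ∀ u : Rˣ, u ^ 2 = 1 → u = 1 ∨ u = -1) : ∏ u : Rˣ, u = -1 := by
  classical
  have hpair : ∏ u ∈ univ.erase (-1 : Rˣ), u = 1 := by
    refine prod_involution (fun u _ => u⁻¹) (fun u _ => mul_inv_cancel u) ?_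
      (fun u hu => by simpa [inv_eq_iff_eq_inv] using hu) (fun u _ => inv_inv u)
    intro u hu hu1 hinv
    rcases h u (by rw [sq]; nth_rewrite 1 [← hinv]; exact inv_mul_cancel u) with rfl | rfl
    · exact hu1 rfl
    · exact (mem_erase.1 hu).1 rfl
  rw [← insert_erase (mem_univ (-1 : Rˣ)), prod_insert (notMem_erase _ _), hpair, mul_one]

section PrimePower

variable {p : ℕ} [Fact p.Prime]

theorem ZMod.units_prime_pow_sq_eq_one (hp2 : p ≠ 2) {f : ℕ} (hf : f ≠ 0)
    {u : (ZMod (p ^ f))ˣ} (hu : u ^ 2 = 1) : u = 1 ∨ u = -1 := by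
  classical
  have hp : p.Prime := Fact.out
  have := ZMod.isCyclic_units_of_prime_pow p hp hp2 f
  have h2 : 2 < p ^ f := by
    have := hp.two_le
    calc 2 < p := by omega
      _ ≤ p ^ f := Nat.le_self_pow hf p
  have : Fact (2 < p ^ f) := ⟨h2⟩
  have hne : (1 : (ZMod (p ^ f))ˣ) ≠ -1 := fun h =>
    ZMod.neg_one_ne_one (n := p ^ f) (by simpa using (congrArg Units.val h).symm)
  have hsub : ({1, -1} : Finset (ZMod (p ^ f))ˣ) ⊆ ({v | v ^ 2 = 1} : Finset _) := by
    intro v hv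
    rcases mem_insert.1 hv with rfl | hv <;> simp_all
  have hcard := IsCyclic.card_pow_eq_one_le (α := (ZMod (p ^ f))ˣ) two_pos
  have hu' : u ∈ ({1, -1} : Finset (ZMod (p ^ f))ˣ) := by
    rw [eq_of_subset_of_card_le hsub (by rwa [card_pair hne])]
    simpa using hu
  simpa using hu'

/-- For odd `p` the product is `-1`; for `p = 2` only its square is needed, which is `1` in any
finite abelian group. -/
theorem ZMod.prod_units_prime_pow_pow_self {f : ℕ} (hf : f ≠ 0) :
    (∏ u : (ZMod (p ^ f))ˣ, (u : ZMod (p ^ f))) ^ p = (-1) ^ p := by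
  rw [← Units.coe_prod, ← Units.val_pow_eq_pow_val]
  rcases eq_or_ne p 2 with rfl | hp2
  · rw [sq_prod_univ_eq_one, Units.val_one, neg_one_sq]
  · rw [prod_units_eq_neg_one_of_sq_eq_one fun u => ZMod.units_prime_pow_sq_eq_one hp2 hf]
    simp

theorem pFreeFactorial_mul_pow_succ_cast (m e : ℕ) :
    (pFreeFactorial p (m * p ^ (e + 1)) : ZMod (p ^ e)) = (-1) ^ (p * m) := by
  rcases eq_or_ne e 0 with rfl | he
  · have : Subsingleton (ZMod (p ^ 0)) := by rw [pow_zero]; infer_instance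
    exact Subsingleton.elim _ _
  rw [show m * p ^ (e + 1) = p * m * p ^ e by ring, pFreeFactorial_mul_cast (dvd_pow_self p he),
    pFreeFactorial_pow_cast he, pow_mul, ZMod.prod_units_prime_pow_pow_self he, pow_mul]

end PrimePower

def zSeq (p m e : ℕ) : ℤ := (-1) ^ (p * m * e) * unitPart p ((m * p ^ e)!)

section Limit

variable {p : ℕ} [Fact p.Prime]

theorem zSeq_succ_modEq (m e : ℕ) : zSeq p m (e + 1) ≡ zSeq p m e [ZMOD p ^ e] := by
  have hp : p.Prime := Fact.out
  have hdiv : m * p ^ (e + 1) / p = m * p ^ e := by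
    rw [pow_succ, ← mul_assoc, Nat.mul_div_cancel _ hp.pos]
  have hsq : ((-1 : ZMod (p ^ e)) ^ (p * m)) ^ 2 = 1 := by
    rw [← pow_mul]; exact Even.neg_one_pow ⟨p * m, by ring⟩
  rw [← Nat.cast_pow, ← ZMod.intCast_eq_intCast_iff, zSeq, zSeq, unitPart_factorial hp, hdiv]
  push_cast
  rw [pFreeFactorial_mul_pow_succ_cast, _root_.mul_add_one, pow_add]
  linear_combination
    ((-1 : ZMod (p ^ e)) ^ (p * m * e) * (unitPart p ((m * p ^ e)!) : ZMod (p ^ e))) * hsq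

theorem zSeq_modEq_of_le (m : ℕ) {e e' : ℕ} (h : e ≤ e') :
    zSeq p m e' ≡ zSeq p m e [ZMOD p ^ e] := by
  induction e', h using Nat.le_induction with
  | base => rfl
  | succ e' he ih => exact ((zSeq_succ_modEq m e').of_dvd (pow_dvd_pow _ he)).trans ih

theorem PadicInt.toZModPow_eq_iff_norm_sub_le {x y : ℤ_[p]} {n : ℕ} :
    toZModPow n x = toZModPow n y ↔ ‖x - y‖ ≤ (p : ℝ) ^ (-(n : ℤ)) := by
  rw [norm_le_pow_iff_mem_span_pow, ← ker_toZModPow, RingHom.mem_ker, map_sub, sub_eq_zero]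

theorem IsZ.toZModPow_eq {n : ℕ} {z : ℤ_[p]} (h : IsZ p n z) {e e' : ℕ} (he : e ≤ e') :
    PadicInt.toZModPow e z = zSeq p (unitPart p n) e' := by
  have hlim : Filter.Tendsto (fun e'' => (zSeq p (unitPart p n) e'' : ℤ_[p])) Filter.atTop
      (nhds z) := by
    unfold IsZ at h
    push_cast [zSeq]
    exact h
  rw [← map_intCast (PadicInt.toZModPow e), PadicInt.toZModPow_eq_iff_norm_sub_le]
  refine le_of_tendsto (hlim.sub_const _).norm (Filter.eventually_atTop.2 ⟨e', fun e'' he'' => ?_⟩)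
  rw [← Int.cast_sub, PadicInt.norm_int_le_pow_iff_dvd]
  exact ((zSeq_modEq_of_le _ he'').of_dvd (pow_dvd_pow _ he)).symm.dvd

end Limit

section Binomial

variable {p : ℕ}

theorem unitPart_choose_mul_factorial_mul_factorial (hp : p.Prime) {n k : ℕ} (hkn : k ≤ n) :
    unitPart p (n.choose k) * unitPart p k ! * unitPart p (n - k)! = unitPart p n ! := by
  rw [← unitPart_mul hp, ← unitPart_mul hp, Nat.choose_mul_factorial_mul_factorial hkn]

theorem zSeq_unitPart_add_padicValNat (hp : p.Prime) (n e : ℕ) :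
    zSeq p (unitPart p n) (e + padicValNat p n)
      = (-1) ^ (p * n * (e + padicValNat p n)) * unitPart p ((n * p ^ e)!) := by
  have hn : unitPart p n * p ^ (e + padicValNat p n) = n * p ^ e := by
    conv_rhs => rw [← pow_padicValNat_mul_unitPart hp n]
    ring
  rw [zSeq, hn, neg_one_pow_prime_mul_unitPart hp]

theorem neg_one_pow_choose_sign {a b k c : ℕ} (hba : b ≤ a) (hab : padicValNat p (a - b) = 0)
    (hk : ({padicValNat p a, padicValNat p b} : Set ℕ) = {0, k})
    (hc : (padicValNat p a = k ∧ c = a) ∨ (padicValNat p b = k ∧ c = b)) (e : ℕ) :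
    (-1 : ℤ) ^ (p * b * (e + padicValNat p b)) * (-1) ^ (p * (a - b) * (e + padicValNat p (a - b)))
      = (-1) ^ (p * c * k) * (-1) ^ (p * a * (e + padicValNat p a)) := by
  have hcase : (padicValNat p a = k ∧ padicValNat p b = 0 ∧ c = a) ∨
      (padicValNat p b = k ∧ padicValNat p a = 0 ∧ c = b) := by
    have h0 := hk ▸ (show (0 : ℕ) ∈ ({0, k} : Set ℕ) by simp)
    have ha := hk ▸ (show padicValNat p a ∈ ({padicValNat p a, padicValNat p b} : Set ℕ) by simp)
    have hb := hk ▸ (show padicValNat p b ∈ ({padicValNat p a, padicValNat p b} : Set ℕ) by simp)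
    simp only [Set.mem_insert_iff, Set.mem_singleton_iff] at h0 ha hb
    omega
  rw [← pow_add, ← pow_add]
  refine neg_one_pow_congr (Nat.even_add.1 ?_)
  obtain ⟨d, rfl⟩ := exists_add_of_le hba
  rw [Nat.add_sub_cancel_left] at hab ⊢
  rcases hcase with ⟨hα, hβ, hc⟩ | ⟨hβ, hα, hc⟩ <;> rw [hα, hβ, hab, hc]
  · exact ⟨p * b * e + p * d * e + p * (b + d) * k, by ring⟩
  · exact ⟨p * b * e + p * d * e + p * b * k, by ring⟩

end Binomial

theorem stmt7_general (p : ℕ) [Fact p.Prime] (a b k c : ℕ) (hba : b ≤ a)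
    (hab : padicValNat p (a - b) = 0)
    (hk : ({padicValNat p a, padicValNat p b} : Set ℕ) = {0, k})
    (hc : (padicValNat p a = k ∧ c = a) ∨ (padicValNat p b = k ∧ c = b))
    (za zb zab : ℤ_[p]) (hza : IsZ p a za) (hzb : IsZ p b zb) (hzab : IsZ p (a - b) zab) :
    ∃ E : ℕ, ∀ e ≥ E,
      ‖(unitPart p ((a * p ^ e).choose (b * p ^ e)) : ℤ_[p]) * (zb * zab) -
        (-1 : ℤ_[p]) ^ (p * c * k) * za‖ ≤ (p : ℝ) ^ (-(e : ℤ)) := by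
  have hp : p.Prime := Fact.out
  refine ⟨0, fun e _ => ?_⟩
  have hfact := unitPart_choose_mul_factorial_mul_factorial hp (Nat.mul_le_mul_right (p ^ e) hba)
  rw [← Nat.sub_mul] at hfact
  have hkey : (unitPart p ((a * p ^ e).choose (b * p ^ e)) : ℤ) *
      (zSeq p (unitPart p b) (e + padicValNat p b) *
        zSeq p (unitPart p (a - b)) (e + padicValNat p (a - b)))
      = (-1) ^ (p * c * k) * zSeq p (unitPart p a) (e + padicValNat p a) := by
    simp only [zSeq_unitPart_add_padicValNat hp, ← hfact]
    push_cast
    linear_combination (unitPart p ((a * p ^ e).choose (b * p ^ e)) * unitPart p (b * p ^ e)! *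
      unitPart p ((a - b) * p ^ e)! : ℤ) * neg_one_pow_choose_sign hba hab hk hc e
  rw [← PadicInt.toZModPow_eq_iff_norm_sub_le]
  simp only [map_mul, map_pow, map_neg, map_one, map_natCast]
  rw [hza.toZModPow_eq (Nat.le_add_right e _), hzb.toZModPow_eq (Nat.le_add_right e _),
    hzab.toZModPow_eq (Nat.le_add_right e _)]
  exact_mod_cast congrArg (Int.cast : ℤ → ZMod (p ^ e)) hkey

theorem stmt7 (p : ℕ) [Fact p.Prime] (a b k c : ℕ) (hb : 1 ≤ b) (hba : b ≤ a)
    (hab : padicValNat p (a - b) = 0)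
    (hk : ({padicValNat p a, padicValNat p b} : Set ℕ) = {0, k})
    (hc : (padicValNat p a = k ∧ c = a) ∨ (padicValNat p b = k ∧ c = b))
    (za zb zab : ℤ_[p]) (hza : IsZ p a za) (hzb : IsZ p b zb) (hzab : IsZ p (a - b) zab) :
    ∃ E : ℕ, ∀ e ≥ E,
      ‖(unitPart p ((a * p ^ e).choose (b * p ^ e)) : ℤ_[p]) * (zb * zab) -
        (-1 : ℤ_[p]) ^ (p * c * k) * za‖ ≤ (p : ℝ) ^ (-(e : ℤ)) :=
  stmt7_general p a b k c hba hab hk hc za zb zab hza hzb hzab
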